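/- arXiv:2012.06987 — 3 statements merged into one kernel-verified Lean document; each statement's English description precedes it below -/
import Mathlib

section
/- Let N be a finite index set, let p_v ∈ (0,1] for each v ∈ N, and let (S_v)_{v∈N} be independent Bernoulli(p_s) random variables with p_s ∈ (0,1]. With exponent c_l = 1/p_s, the sub-sampled product estimator over-estimates the full product in expectation: ∏_{v∈N} p_v ≤ E[ ∏_{v∈N} p_v^{S_v/p_s} ]. -/
/-!
Write the estimator as `exp (∑ v, log (p v) * S v / ps)`. Jensen's inequality for the convex
function `exp` bounds its expectation below by `exp (∑ v, log (p v) * E[S v] / ps)`, and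
`E[S v] = ps` makes this `∏ v, p v`.
-/

open MeasureTheory ProbabilityTheory Finset

theorem Real.prod_rpow_eq_exp_sum {ι : Type*} (s : Finset ι) {p : ι → ℝ}
    (hp : ∀ i ∈ s, 0 < p i) (x : ι → ℝ) :
    ∏ i ∈ s, p i ^ x i = Real.exp (∑ i ∈ s, Real.log (p i) * x i) := by
  rw [Real.exp_sum]
  exact prod_congr rfl fun i hi => Real.rpow_def_of_pos (hp i hi) _

section
variable {Ω : Type*} [MeasurableSpace Ω] {μ : Measure Ω}

theorem Real.exp_integral_le_integral_exp [IsProbabilityMeasure μ] {f : Ω → ℝ}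
    (hf : Integrable f μ) (hexp : Integrable (fun ω => Real.exp (f ω)) μ) :
    Real.exp (∫ ω, f ω ∂μ) ≤ ∫ ω, Real.exp (f ω) ∂μ :=
  convexOn_exp.map_integral_le Real.continuous_exp.continuousOn isClosed_univ
    (ae_of_all _ fun _ => Set.mem_univ _) hf hexp

theorem prod_rpow_integral_le_integral_prod_rpow [IsProbabilityMeasure μ] {ι : Type*}
    [Fintype ι] {p : ι → ℝ} (hp : ∀ i, 0 < p i) {X : ι → Ω → ℝ}
    (hX : ∀ i, Integrable (X i) μ) (hprod : Integrable (fun ω => ∏ i, p i ^ X i ω) μ) :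
    ∏ i, p i ^ ∫ ω, X i ω ∂μ ≤ ∫ ω, ∏ i, p i ^ X i ω ∂μ := by
  have hexp : ∀ x : ι → ℝ, ∏ i, p i ^ x i = Real.exp (∑ i, Real.log (p i) * x i) :=
    Real.prod_rpow_eq_exp_sum _ fun i _ => hp i
  have hsum : Integrable (fun ω => ∑ i, Real.log (p i) * X i ω) μ :=
    integrable_finsetSum _ fun i _ => (hX i).const_mul _
  simp only [hexp] at hprod ⊢
  calc Real.exp (∑ i, Real.log (p i) * ∫ ω, X i ω ∂μ)
      = Real.exp (∫ ω, ∑ i, Real.log (p i) * X i ω ∂μ) := by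
        rw [integral_finsetSum _ fun i _ => (hX i).const_mul _]
        simp only [integral_const_mul]
    _ ≤ _ := Real.exp_integral_le_integral_exp hsum hprod

theorem integral_eq_measureReal_of_forall_eq_zero_or_eq_one {X : Ω → ℝ} (hX : Measurable X)
    (h01 : ∀ ω, X ω = 0 ∨ X ω = 1) : ∫ ω, X ω ∂μ = μ.real {ω | X ω = 1} := by
  have hs : MeasurableSet {ω | X ω = 1} := hX (measurableSet_singleton 1)
  rw [← integral_indicator_one hs]
  congr 1 with ω
  rcases h01 ω with h | h <;> simp [h]

end

theorem pollSusceptible_lower_bound_general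
    {Ω : Type*} [MeasurableSpace Ω] (μ : Measure Ω) [IsProbabilityMeasure μ]
    {N : Type*} [Fintype N]
    (p : N → ℝ) (hp : ∀ v, p v ∈ Set.Ioc (0 : ℝ) 1)
    (ps : ℝ) (hps : ps ∈ Set.Ioc (0 : ℝ) 1)
    (S : N → Ω → ℝ)
    (hSmeas : ∀ v, Measurable (S v))
    (hSval : ∀ v ω, S v ω = 0 ∨ S v ω = 1)
    (hSbern : ∀ v, μ {ω | S v ω = 1} = ENNReal.ofReal ps) :
    ∏ v, p v ≤ μ[fun ω => ∏ v, (p v) ^ (S v ω / ps)] := by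
  have hS01 : ∀ v ω, S v ω ∈ Set.Icc (0 : ℝ) 1 := fun v ω => by
    rcases hSval v ω with h | h <;> simp [h]
  have hmean : ∀ v, ∫ ω, S v ω / ps ∂μ = 1 := fun v => by
    rw [integral_div, integral_eq_measureReal_of_forall_eq_zero_or_eq_one (hSmeas v) (hSval v),
      measureReal_def, hSbern, ENNReal.toReal_ofReal hps.1.le, div_self hps.1.ne']
  have hint : ∀ v, Integrable (fun ω => S v ω / ps) μ := fun v =>
    (Integrable.of_mem_Icc 0 1 (hSmeas v).aemeasurable (ae_of_all _ (hS01 v))).div_const ps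
  have hprod : Integrable (fun ω => ∏ v, p v ^ (S v ω / ps)) μ := by
    refine Integrable.of_mem_Icc 0 1 (by fun_prop) (ae_of_all _ fun ω => ⟨?_, ?_⟩)
    · exact prod_nonneg fun v _ => Real.rpow_nonneg (hp v).1.le _
    · exact prod_le_one (fun v _ => Real.rpow_nonneg (hp v).1.le _) fun v _ =>
        Real.rpow_le_one (hp v).1.le (hp v).2 (div_nonneg (hS01 v ω).1 hps.1.le)
  calc ∏ v, p v = ∏ v, p v ^ ∫ ω, S v ω / ps ∂μ := by simp only [hmean, Real.rpow_one]
    _ ≤ _ := prod_rpow_integral_le_integral_prod_rpow (fun v => (hp v).1) hint hprod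

/-- With exponent `c_l = 1/p_s`, the sub-sampled product estimator
over-estimates the full product in expectation:
`∏_{v∈N} p_v ≤ E[ ∏_{v∈N} p_v^{S_v/p_s} ]`. -/
theorem pollSusceptible_lower_bound
    {Ω : Type*} [MeasurableSpace Ω] (μ : Measure Ω) [IsProbabilityMeasure μ]
    {N : Type*} [Fintype N]
    (p : N → ℝ) (hp : ∀ v, p v ∈ Set.Ioc (0 : ℝ) 1)
    (ps : ℝ) (hps : ps ∈ Set.Ioc (0 : ℝ) 1)
    (S : N → Ω → ℝ)
    (hSmeas : ∀ v, Measurable (S v))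
    (hSval : ∀ v ω, S v ω = 0 ∨ S v ω = 1)
    (hSbern : ∀ v, μ {ω | S v ω = 1} = ENNReal.ofReal ps)
    (hindep : iIndepFun S μ) :
    ∏ v, p v ≤ μ[fun ω => ∏ v, (p v) ^ (S v ω / ps)] :=
  pollSusceptible_lower_bound_general μ p hp ps hps S hSmeas hSval hSbern
end

section
/- Let N be a finite index set, let p_min ∈ (0,1), let p_v ∈ [p_min,1] for each v ∈ N, and let (S_v)_{v∈N} be independent Bernoulli(p_s) random variables with p_s ∈ (0,1]. Assume p_s ≥ √(−log(p_min)/2) and let c_u > 0 satisfy c_u·p_s + c_u²·log(p_min)/8 = 1. Then the sub-sampled product estimator with exponent c_u under-estimates the full product in expectation: E[ ∏_{v∈N} p_v^{c_u·S_v} ] ≤ ∏_{v∈N} p_v. -/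
open MeasureTheory ProbabilityTheory Finset Real

/- Each factor `E[p_v ^ (c S_v)]` is the moment generating function of the Bernoulli variable
`S_v` at `t_v = c log p_v`, and independence turns the expectation of the product into the
product of these factors. Hoeffding's lemma bounds each one by `exp (p_s t_v + t_v² / 8)`, and the
defining equation of `c` makes `log p_v - p_s t_v - t_v² / 8 = (c² / 8) (-log p_v) (log p_v - log p_min)`,
which is nonnegative because `log p_min ≤ log p_v ≤ 0`. -/

namespace ProbabilityTheory

variable {Ω : Type*} [MeasurableSpace Ω] {μ : Measure Ω} {X : Ω → ℝ}

lemma mgf_le_exp_of_mem_Icc [IsProbabilityMeasure μ] {a b : ℝ} (hm : AEMeasurable X μ)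
    (hb : ∀ᵐ ω ∂μ, X ω ∈ Set.Icc a b) (t : ℝ) :
    mgf X μ t ≤ exp (t * μ[X] + (b - a) ^ 2 * t ^ 2 / 8) := by
  have hoeffding := (hasSubgaussianMGF_of_mem_Icc hm hb).mgf_le t
  have hparam : (((‖b - a‖₊ / 2) ^ 2 : NNReal) : ℝ) = (b - a) ^ 2 / 4 := by
    simp [div_pow, sq_abs]; ring
  rw [hparam] at hoeffding
  calc mgf X μ t = mgf (fun ω ↦ (X ω - μ[X]) + μ[X]) μ t := by simp
    _ = mgf (fun ω ↦ X ω - μ[X]) μ t * exp (t * μ[X]) := mgf_add_const _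
    _ ≤ exp ((b - a) ^ 2 / 4 * t ^ 2 / 2) * exp (t * μ[X]) := by gcongr
    _ = exp (t * μ[X] + (b - a) ^ 2 * t ^ 2 / 8) := by rw [← exp_add]; ring_nf

lemma integral_eq_measureReal_of_eq_zero_or_one (hX : Measurable X)
    (h01 : ∀ ω, X ω = 0 ∨ X ω = 1) : μ[X] = μ.real {ω | X ω = 1} := by
  have hset : MeasurableSet {ω | X ω = 1} := hX (measurableSet_singleton 1)
  have hind : X = {ω | X ω = 1}.indicator 1 := by
    funext ω
    rcases h01 ω with h | h <;> simp [h]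
  rw [← integral_indicator_one hset, ← hind]

lemma mgf_le_exp_of_bernoulli [IsProbabilityMeasure μ] {q : ℝ} (hq : 0 ≤ q)
    (hX : Measurable X) (h01 : ∀ ω, X ω = 0 ∨ X ω = 1)
    (hbern : μ {ω | X ω = 1} = ENNReal.ofReal q) (t : ℝ) :
    mgf X μ t ≤ exp (q * t + t ^ 2 / 8) := by
  have hmean : μ[X] = q := by
    rw [integral_eq_measureReal_of_eq_zero_or_one hX h01, measureReal_def, hbern,
      ENNReal.toReal_ofReal hq]
  have hIcc : ∀ᵐ ω ∂μ, X ω ∈ Set.Icc (0 : ℝ) 1 := .of_forall fun ω ↦ by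
    rcases h01 ω with h | h <;> simp [h]
  calc mgf X μ t ≤ exp (t * μ[X] + (1 - 0) ^ 2 * t ^ 2 / 8) :=
        mgf_le_exp_of_mem_Icc hX.aemeasurable hIcc t
    _ = exp (q * t + t ^ 2 / 8) := by rw [hmean]; ring_nf

end ProbabilityTheory

lemma mul_add_sq_div_eight_le {L s c q : ℝ} (hL : L ≤ s) (hs : s ≤ 0)
    (hc : c * q + c ^ 2 * L / 8 = 1) : q * (c * s) + (c * s) ^ 2 / 8 ≤ s := by
  have hgap : s - (q * (c * s) + (c * s) ^ 2 / 8) = c ^ 2 / 8 * (-s) * (s - L) := by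
    linear_combination (-s) * hc
  have : 0 ≤ c ^ 2 / 8 * (-s) * (s - L) :=
    mul_nonneg (mul_nonneg (by positivity) (by linarith)) (by linarith)
  linarith

theorem pollSusceptible_upper_bound_general
    {Ω : Type*} [MeasurableSpace Ω] (μ : Measure Ω) [IsProbabilityMeasure μ]
    {N : Type*} [Fintype N]
    (pmin : ℝ) (hpmin : pmin ∈ Set.Ioo (0 : ℝ) 1)
    (p : N → ℝ) (hp : ∀ v, p v ∈ Set.Icc pmin 1)
    (ps : ℝ) (hps : ps ∈ Set.Ioc (0 : ℝ) 1)
    (cu : ℝ)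
    (hcu : cu * ps + cu ^ 2 * Real.log pmin / 8 = 1)
    (S : N → Ω → ℝ)
    (hSmeas : ∀ v, Measurable (S v))
    (hSval : ∀ v ω, S v ω = 0 ∨ S v ω = 1)
    (hSbern : ∀ v, μ {ω | S v ω = 1} = ENNReal.ofReal ps)
    (hindep : iIndepFun S μ) :
    μ[fun ω => ∏ v, (p v) ^ (cu * S v ω)] ≤ ∏ v, p v := by
  have hp_pos v : 0 < p v := hpmin.1.trans_le (hp v).1
  have hfactor v : ∫ ω, p v ^ (cu * S v ω) ∂μ = mgf (S v) μ (cu * log (p v)) := by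
    simp only [mgf, rpow_def_of_pos (hp_pos v)]
    ring_nf
  calc μ[fun ω => ∏ v, (p v) ^ (cu * S v ω)] = ∏ v, ∫ ω, p v ^ (cu * S v ω) ∂μ :=
        hindep.integral_fun_prod_comp (fun v ↦ (hSmeas v).aemeasurable)
          (fun v ↦ (measurable_const.pow (measurable_const.mul measurable_id)).aestronglyMeasurable)
    _ ≤ ∏ v, p v := by
      refine prod_le_prod (fun v _ ↦ hfactor v ▸ mgf_nonneg) fun v _ ↦ ?_
      calc ∫ ω, p v ^ (cu * S v ω) ∂μ ≤ exp (ps * (cu * log (p v)) + (cu * log (p v)) ^ 2 / 8) :=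
            hfactor v ▸ mgf_le_exp_of_bernoulli hps.1.le (hSmeas v) (hSval v) (hSbern v) _
        _ ≤ exp (log (p v)) := exp_le_exp.2 <| mul_add_sq_div_eight_le
            (log_le_log hpmin.1 (hp v).1) (log_nonpos (hp_pos v).le (hp v).2) hcu
        _ = p v := exp_log (hp_pos v)

/-- With exponent `c_u` solving `c_u p_s + c_u² log(p_min)/8 = 1`,
and `p_s ≥ √(−log p_min / 2)`, the sub-sampled product estimator under-estimates
the full product in expectation. -/
theorem pollSusceptible_upper_bound
    {Ω : Type*} [MeasurableSpace Ω] (μ : Measure Ω) [IsProbabilityMeasure μ]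
    {N : Type*} [Fintype N]
    (pmin : ℝ) (hpmin : pmin ∈ Set.Ioo (0 : ℝ) 1)
    (p : N → ℝ) (hp : ∀ v, p v ∈ Set.Icc pmin 1)
    (ps : ℝ) (hps : ps ∈ Set.Ioc (0 : ℝ) 1)
    (hps_large : ps ≥ Real.sqrt (-Real.log pmin / 2))
    (cu : ℝ) (hcu_pos : 0 < cu)
    (hcu : cu * ps + cu ^ 2 * Real.log pmin / 8 = 1)
    (S : N → Ω → ℝ)
    (hSmeas : ∀ v, Measurable (S v))
    (hSval : ∀ v ω, S v ω = 0 ∨ S v ω = 1)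
    (hSbern : ∀ v, μ {ω | S v ω = 1} = ENNReal.ofReal ps)
    (hindep : iIndepFun S μ) :
    μ[fun ω => ∏ v, (p v) ^ (cu * S v ω)] ≤ ∏ v, p v :=
  pollSusceptible_upper_bound_general μ pmin hpmin p hp ps hps cu hcu S hSmeas hSval hSbern hindep
end

section
/- Let E be a finite set of directed edges with weights w_e ≥ 0, let p_s ∈ (0,1] and p_init ∈ [0,1], and suppose each node u carries a sampling indicator S_u ~ Bernoulli(p_s) and an initial-infection indicator I_u ~ Bernoulli(p_init), with all indicators across all nodes mutually independent. For each edge e = (u,v) define Ẑ_e = w_e if S_u = S_v = 1, I_u = 1 and I_v = 0, and Ẑ_e = 0 otherwise. Then E[ (1/p_s²)·∑_{e∈E} Ẑ_e ] = ∑_{(u,v)∈E} p_init·(1 − p_init)·w_{u,v}, i.e., (1/p_s²)·∑_e Ẑ_e is an unbiased estimator of the expected total weight e_c^t of the edges crossing the random initial-infection cut of the full contact network. -/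
/-!
By linearity of expectation it suffices to treat a single edge `(u, v)`. Since `u ≠ v`, the
indicators `S u`, `S v`, `I u`, `I v` are four distinct members of the independent family
`Sum.elim S I`, so the edge is sampled and crosses the cut with probability
`ps ^ 2 * pinit * (1 - pinit)`; the factor `1 / ps ^ 2` removes the sampling.
-/

open MeasureTheory ProbabilityTheory Finset

section

variable {Ω : Type*} [MeasurableSpace Ω] {μ : Measure Ω}

lemma measureReal_preimage_zero_eq_one_sub [IsProbabilityMeasure μ] {f : Ω → ℝ}
    (hf : Measurable f) (hval : ∀ ω, f ω = 0 ∨ f ω = 1) :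
    μ.real (f ⁻¹' {0}) = 1 - μ.real (f ⁻¹' {1}) := by
  have hcompl : f ⁻¹' {0} = (f ⁻¹' {1})ᶜ := by
    ext ω; rcases hval ω with h | h <;> simp [h]
  rw [hcompl, probReal_compl_eq_one_sub (hf (measurableSet_singleton 1))]

lemma ProbabilityTheory.iIndepFun.measure_iInter_preimage_eq_prod {ι κ β : Type*} [Fintype κ]
    [MeasurableSpace β] {X : ι → Ω → β} (hX : iIndepFun X μ) {g : κ → ι} (hg : g.Injective)
    {A : κ → Set β} (hA : ∀ k, MeasurableSet (A k)) :
    μ (⋂ k, X (g k) ⁻¹' A k) = ∏ k, μ (X (g k) ⁻¹' A k) := by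
  simpa using (hX.precomp hg).measure_inter_preimage_eq_mul univ fun k _ ↦ hA k

lemma ProbabilityTheory.iIndepFun.measureReal_inter_preimage_eq_mul_of_ne {V β : Type*}
    [MeasurableSpace β] {X Y : V → Ω → β} (hXY : iIndepFun (Sum.elim X Y) μ) {u v : V}
    (huv : u ≠ v) {a b c d : Set β} (ha : MeasurableSet a) (hb : MeasurableSet b)
    (hc : MeasurableSet c) (hd : MeasurableSet d) :
    μ.real (X u ⁻¹' a ∩ X v ⁻¹' b ∩ Y u ⁻¹' c ∩ Y v ⁻¹' d) =
      μ.real (X u ⁻¹' a) * μ.real (X v ⁻¹' b) * μ.real (Y u ⁻¹' c) * μ.real (Y v ⁻¹' d) := by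
  have hg : (![.inl u, .inl v, .inr u, .inr v] : Fin 4 → V ⊕ V).Injective := by
    intro i j; fin_cases i <;> fin_cases j <;> simp [huv, huv.symm]
  have hprod := hXY.measure_iInter_preimage_eq_prod hg (A := ![a, b, c, d])
    fun k ↦ by fin_cases k <;> assumption
  have hinter : ⋂ k, Sum.elim X Y (![.inl u, .inl v, .inr u, .inr v] k) ⁻¹' ![a, b, c, d] k =
      X u ⁻¹' a ∩ X v ⁻¹' b ∩ Y u ⁻¹' c ∩ Y v ⁻¹' d := by
    ext ω; simp [Fin.forall_fin_succ, and_assoc]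
  simp only [measureReal_def, ← ENNReal.toReal_mul, ← hinter, hprod, Fin.prod_univ_four]
  simp

end

section

variable {Ω V : Type*}

/-- The event on which `Ẑ_(u,v) = w_(u,v)`: both endpoints are sampled and the edge crosses the cut. -/
def sampledCrossingEvent (S I : V → Ω → ℝ) (u v : V) : Set Ω :=
  S u ⁻¹' {1} ∩ S v ⁻¹' {1} ∩ I u ⁻¹' {1} ∩ I v ⁻¹' {0}

variable {S I : V → Ω → ℝ}

lemma ite_eq_indicator_sampledCrossingEvent (u v : V) (c : ℝ) (ω : Ω) :
    (if S u ω = 1 ∧ S v ω = 1 ∧ I u ω = 1 ∧ I v ω = 0 then c else 0) =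
      (sampledCrossingEvent S I u v).indicator (fun _ ↦ c) ω := by
  classical
  rw [sampledCrossingEvent, Set.indicator_apply]
  simp only [Set.mem_inter_iff, Set.mem_preimage, Set.mem_singleton_iff, and_assoc]

variable [MeasurableSpace Ω] {μ : Measure Ω}

lemma measurableSet_sampledCrossingEvent (hS : ∀ u, Measurable (S u))
    (hI : ∀ u, Measurable (I u)) (u v : V) : MeasurableSet (sampledCrossingEvent S I u v) :=
  (((hS u) (measurableSet_singleton 1)).inter ((hS v) (measurableSet_singleton 1))).inter
    ((hI u) (measurableSet_singleton 1)) |>.inter ((hI v) (measurableSet_singleton 0))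

lemma measureReal_sampledCrossingEvent [IsProbabilityMeasure μ]
    (hSI : iIndepFun (Sum.elim S I) μ) (hI : ∀ u, Measurable (I u))
    (hIval : ∀ u ω, I u ω = 0 ∨ I u ω = 1) {u v : V} (huv : u ≠ v) :
    μ.real (sampledCrossingEvent S I u v) = μ.real (S u ⁻¹' {1}) * μ.real (S v ⁻¹' {1}) *
      μ.real (I u ⁻¹' {1}) * (1 - μ.real (I v ⁻¹' {1})) := by
  rw [sampledCrossingEvent, hSI.measureReal_inter_preimage_eq_mul_of_ne huv
    (measurableSet_singleton 1) (measurableSet_singleton 1) (measurableSet_singleton 1)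
    (measurableSet_singleton 0), measureReal_preimage_zero_eq_one_sub (hI v) (hIval v)]

end

theorem pollSpreader_unbiased_general
    {Ω : Type*} [MeasurableSpace Ω] (μ : Measure Ω) [IsProbabilityMeasure μ]
    {V : Type*}
    (E : Finset (V × V)) (hE : ∀ e ∈ E, e.1 ≠ e.2)
    (w : V × V → ℝ)
    (ps : ℝ) (hps : ps ∈ Set.Ioc (0 : ℝ) 1)
    (pinit : ℝ) (hpinit : pinit ∈ Set.Icc (0 : ℝ) 1)
    (S I : V → Ω → ℝ)
    (hSmeas : ∀ u, Measurable (S u)) (hImeas : ∀ u, Measurable (I u))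
    (hIval : ∀ u ω, I u ω = 0 ∨ I u ω = 1)
    (hSbern : ∀ u, μ {ω | S u ω = 1} = ENNReal.ofReal ps)
    (hIbern : ∀ u, μ {ω | I u ω = 1} = ENNReal.ofReal pinit)
    (hindep : iIndepFun (Sum.elim S I) μ) :
    μ[fun ω => (1 / ps ^ 2) *
        ∑ e ∈ E, (if S e.1 ω = 1 ∧ S e.2 ω = 1 ∧ I e.1 ω = 1 ∧ I e.2 ω = 0
          then w e else 0)] =
      ∑ e ∈ E, pinit * (1 - pinit) * w e := by
  have hS (u : V) : μ.real (S u ⁻¹' {1}) = ps :=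
    (congrArg ENNReal.toReal (hSbern u)).trans (ENNReal.toReal_ofReal hps.1.le)
  have hI (u : V) : μ.real (I u ⁻¹' {1}) = pinit :=
    (congrArg ENNReal.toReal (hIbern u)).trans (ENNReal.toReal_ofReal hpinit.1)
  have hmeas (e : V × V) : MeasurableSet (sampledCrossingEvent S I e.1 e.2) :=
    measurableSet_sampledCrossingEvent hSmeas hImeas e.1 e.2
  simp_rw [ite_eq_indicator_sampledCrossingEvent]
  rw [integral_const_mul, integral_finsetSum _ fun e _ ↦ (integrable_const _).indicator (hmeas e),
    mul_sum]
  refine sum_congr rfl fun e he ↦ ?_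
  rw [integral_indicator_const _ (hmeas e), smul_eq_mul,
    measureReal_sampledCrossingEvent hindep hImeas hIval (hE e he), hS, hS, hI, hI]
  field_simp [hps.1.ne']

/-- `(1/p_s²)·∑_{e∈E} Ẑ_e` is an unbiased estimator of the
expected cut weight `e_c^t = ∑_{(u,v)∈E} p_init·(1 − p_init)·w_{u,v}`. -/
theorem pollSpreader_unbiased
    {Ω : Type*} [MeasurableSpace Ω] (μ : Measure Ω) [IsProbabilityMeasure μ]
    {V : Type*}
    (E : Finset (V × V)) (hE : ∀ e ∈ E, e.1 ≠ e.2)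
    (w : V × V → ℝ) (hw : ∀ e ∈ E, 0 ≤ w e)
    (ps : ℝ) (hps : ps ∈ Set.Ioc (0 : ℝ) 1)
    (pinit : ℝ) (hpinit : pinit ∈ Set.Icc (0 : ℝ) 1)
    (S I : V → Ω → ℝ)
    (hSmeas : ∀ u, Measurable (S u)) (hImeas : ∀ u, Measurable (I u))
    (hSval : ∀ u ω, S u ω = 0 ∨ S u ω = 1)
    (hIval : ∀ u ω, I u ω = 0 ∨ I u ω = 1)
    (hSbern : ∀ u, μ {ω | S u ω = 1} = ENNReal.ofReal ps)
    (hIbern : ∀ u, μ {ω | I u ω = 1} = ENNReal.ofReal pinit)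
    (hindep : iIndepFun (Sum.elim S I) μ) :
    μ[fun ω => (1 / ps ^ 2) *
        ∑ e ∈ E, (if S e.1 ω = 1 ∧ S e.2 ω = 1 ∧ I e.1 ω = 1 ∧ I e.2 ω = 0
          then w e else 0)] =
      ∑ e ∈ E, pinit * (1 - pinit) * w e :=
  pollSpreader_unbiased_general μ E hE w ps hps pinit hpinit S I hSmeas hImeas hIval hSbern hIbern
    hindep
end
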